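/- Fix positive integers n, k ≤ n and p ∈ (0,1). The probability that the random graph G(n,p) has no increasing path of length k under some edge-ordering (i.e., f(G(n,p)) < k) is at most C(n,k)^n · (1−p)^{C(n,2) − n·C(k,2)}. -/

import Mathlib

open SimpleGraph

variable {V : Type*} [Fintype V]

/-- An edge-ordering of `G`: a bijection from the edge set onto `{1, ..., |E(G)|}`. -/
def IsEdgeOrdering (G : SimpleGraph V) (φ : Sym2 V → ℕ) : Prop :=
  Set.BijOn φ G.edgeSet (Set.Icc 1 G.edgeSet.ncard)

/-- `G` has an increasing path of length `ℓ` with respect to the labelling `φ`. -/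
def HasIncPath (G : SimpleGraph V) (φ : Sym2 V → ℕ) (ℓ : ℕ) : Prop :=
  ∃ (u v : V) (p : G.Walk u v), p.IsPath ∧ List.Chain' (· < ·) (p.edges.map φ) ∧ p.length = ℓ

/-- `ψ(G, φ)`: the length of the longest increasing path under `φ`. -/
noncomputable def psi (G : SimpleGraph V) (φ : Sym2 V → ℕ) : ℕ :=
  sSup {ℓ | HasIncPath G φ ℓ}

/-- `f(G)`: the minimum over all edge-orderings of the longest increasing path length. -/
noncomputable def incf (G : SimpleGraph V) : ℕ :=
  sInf {m | ∃ φ : Sym2 V → ℕ, IsEdgeOrdering G φ ∧ psi G φ = m}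

open scoped Classical

/-- The probability, in the Erdős–Rényi model `G(n,p)`, of the event `event`
(a property of the edge set, viewed as a subset of the edge set of `K_n`). -/
noncomputable def erProb (n : ℕ) (p : ℝ) (event : Finset (Sym2 (Fin n)) → Prop) : ℝ :=
  ∑ H ∈ ((⊤ : SimpleGraph (Fin n)).edgeFinset.powerset).filter event,
    p ^ H.card * (1 - p) ^ ((⊤ : SimpleGraph (Fin n)).edgeFinset.card - H.card)

/-!
Put a pedestrian on every vertex and process the edges in increasing order of their labels: when
the edge `xy` comes, the pedestrians at `x` and `y` exchange places along it, unless the one at `x`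
has already visited `y` or the one at `y` has already visited `x`. Every pedestrian then walks
along an increasing path, hence visits at most `k` vertices when `f(G) < k`, and both ends of every
edge are visited by a single pedestrian. So `E(G)` lies in the union of `n` cliques on `k`
vertices each; there are at most `C(n,k)^n` such unions, and each of them misses at least
`C(n,2) - n·C(k,2)` of the possible edges, all of which are absent from `G(n,p)` with
probability `(1-p)^(C(n,2) - n·C(k,2))` or less.
-/

open Finset

section Pedestrians

variable {V : Type*} {G : SimpleGraph V} {φ : Sym2 V → ℕ} {t : ℕ}

def IsIncPathBelow (φ : Sym2 V → ℕ) (t : ℕ) {u v : V} (p : G.Walk u v) : Prop :=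
  p.IsPath ∧ (p.edges.map φ).IsChain (· < ·) ∧ ∀ e ∈ p.edges, φ e < t

namespace IsIncPathBelow

variable {u v w : V} {p : G.Walk u v}

lemma nil : IsIncPathBelow φ t (Walk.nil : G.Walk u u) :=
  ⟨Walk.IsPath.nil, List.isChain_nil, by simp⟩

lemma mono (hp : IsIncPathBelow φ t p) {s : ℕ} (hts : t ≤ s) : IsIncPathBelow φ s p :=
  ⟨hp.1, hp.2.1, fun e he => (hp.2.2 e he).trans_le hts⟩

lemma concat (hp : IsIncPathBelow φ t p) (hw : w ∉ p.support) (h : G.Adj v w)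
    (ht : t ≤ φ s(v, w)) : IsIncPathBelow φ (φ s(v, w) + 1) (p.concat h) := by
  refine ⟨hp.1.concat hw h, ?_, ?_⟩
  · rw [Walk.edges_concat, List.concat_eq_append, List.map_append]
    refine hp.2.1.append (List.isChain_singleton _) fun a ha b hb => ?_
    obtain ⟨e, he, rfl⟩ := List.mem_map.1 (List.mem_of_mem_getLast? ha)
    simp only [List.map_cons, List.map_nil, List.head?_cons, Option.mem_some_iff] at hb
    exact hb ▸ (hp.2.2 e he).trans_le ht
  · simp only [Walk.edges_concat, List.concat_eq_append, List.mem_append, List.mem_singleton]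
    rintro e (he | rfl)
    · exact (hp.2.2 e he).trans_le (ht.trans (Nat.le_succ _))
    · exact Nat.lt_succ_self _

end IsIncPathBelow

/-- The pedestrians once the edges with labels `< t` have been processed: `walk x` is the path
walked so far by the pedestrian now standing at `x`. -/
structure PedestrianState (G : SimpleGraph V) (φ : Sym2 V → ℕ) (t : ℕ) where
  walk : ∀ x, Σ s, G.Walk s x
  isIncPathBelow : ∀ x, IsIncPathBelow φ t (walk x).2
  covers : ∀ e ∈ G.edgeSet, φ e < t → ∃ x, ∀ y ∈ e, y ∈ (walk x).2.support

namespace PedestrianState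

def init : PedestrianState G φ 0 where
  walk x := ⟨x, Walk.nil⟩
  isIncPathBelow _ := .nil
  covers _ _ h := absurd h (Nat.not_lt_zero _)

def ofCovered (P : PedestrianState G φ t)
    (h : ∀ e ∈ G.edgeSet, φ e = t → ∃ x, ∀ y ∈ e, y ∈ (P.walk x).2.support) :
    PedestrianState G φ (t + 1) where
  walk := P.walk
  isIncPathBelow x := (P.isIncPathBelow x).mono t.le_succ
  covers e he hlt := (Nat.lt_succ_iff_lt_or_eq.1 hlt).elim (P.covers e he) (h e he)

variable {x y : V}

noncomputable def swapWalks (P : PedestrianState G φ t) (h : G.Adj x y) :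
    ∀ z, Σ s, G.Walk s z :=
  Function.update (Function.update P.walk y ⟨_, (P.walk x).2.concat h⟩) x
    ⟨_, (P.walk y).2.concat h.symm⟩

section swapWalks

variable (P : PedestrianState G φ t) (h : G.Adj x y)

lemma swapWalks_left : P.swapWalks h x = ⟨_, (P.walk y).2.concat h.symm⟩ :=
  Function.update_self ..

lemma swapWalks_right : P.swapWalks h y = ⟨_, (P.walk x).2.concat h⟩ := by
  rw [swapWalks, Function.update_of_ne h.ne.symm, Function.update_self]

lemma swapWalks_of_ne {z : V} (hzx : z ≠ x) (hzy : z ≠ y) : P.swapWalks h z = P.walk z := by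
  rw [swapWalks, Function.update_of_ne hzx, Function.update_of_ne hzy]

variable {P h}

lemma isIncPathBelow_swapWalks (hxy : φ s(x, y) = t) (hx : x ∉ (P.walk y).2.support)
    (hy : y ∉ (P.walk x).2.support) (z : V) : IsIncPathBelow φ (t + 1) (P.swapWalks h z).2 := by
  rcases eq_or_ne z x with rfl | hzx
  · rw [swapWalks_left]
    have := (P.isIncPathBelow y).concat hx h.symm (by rw [Sym2.eq_swap, hxy])
    rwa [Sym2.eq_swap, hxy] at this
  rcases eq_or_ne z y with rfl | hzy
  · rw [swapWalks_right]
    have := (P.isIncPathBelow x).concat hy h hxy.ge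
    rwa [hxy] at this
  · rw [swapWalks_of_ne P h hzx hzy]
    exact (P.isIncPathBelow z).mono t.le_succ

lemma exists_support_subset_swapWalks (z : V) :
    ∃ z', (P.walk z).2.support ⊆ (P.swapWalks h z').2.support := by
  rcases eq_or_ne z x with rfl | hzx
  · exact ⟨y, by rw [swapWalks_right, Walk.support_concat]; exact List.subset_append_left _ _⟩
  rcases eq_or_ne z y with rfl | hzy
  · exact ⟨x, by rw [swapWalks_left, Walk.support_concat]; exact List.subset_append_left _ _⟩
  · exact ⟨z, by rw [swapWalks_of_ne P h hzx hzy]; exact List.Subset.refl _⟩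

end swapWalks

noncomputable def swap (P : PedestrianState G φ t) (hinj : Set.InjOn φ G.edgeSet)
    (h : G.Adj x y) (hxy : φ s(x, y) = t) (hx : x ∉ (P.walk y).2.support)
    (hy : y ∉ (P.walk x).2.support) : PedestrianState G φ (t + 1) where
  walk := P.swapWalks h
  isIncPathBelow := isIncPathBelow_swapWalks hxy hx hy
  covers e he hlt := by
    rcases Nat.lt_succ_iff_lt_or_eq.1 hlt with hlt | heq
    · obtain ⟨z, hz⟩ := P.covers e he hlt
      obtain ⟨z', hz'⟩ := exists_support_subset_swapWalks (h := h) z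
      exact ⟨z', fun w hw => hz' (hz w hw)⟩
    · obtain rfl : e = s(x, y) := hinj he h (heq.trans hxy.symm)
      refine ⟨y, fun w hw => ?_⟩
      rw [swapWalks_right, Walk.support_concat, List.mem_append, List.mem_singleton]
      rcases Sym2.mem_iff.1 hw with rfl | rfl
      · exact .inl (Walk.end_mem_support _)
      · exact .inr rfl

theorem nonempty (hinj : Set.InjOn φ G.edgeSet) : ∀ t, Nonempty (PedestrianState G φ t)
  | 0 => ⟨init⟩
  | t + 1 => by
    obtain ⟨P⟩ := nonempty hinj t
    by_cases hswap : ∃ x y, ∃ h : G.Adj x y, φ s(x, y) = t ∧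
        x ∉ (P.walk y).2.support ∧ y ∉ (P.walk x).2.support
    · obtain ⟨x, y, h, hxy, hx, hy⟩ := hswap
      exact ⟨P.swap hinj h hxy hx hy⟩
    refine ⟨P.ofCovered fun e he hlt => ?_⟩
    induction e using Sym2.ind with | _ x y => ?_
    by_cases hx : x ∈ (P.walk y).2.support
    · refine ⟨y, fun z hz => ?_⟩
      rcases Sym2.mem_iff.1 hz with rfl | rfl
      exacts [hx, Walk.end_mem_support _]
    · refine ⟨x, fun z hz => ?_⟩
      have hy : y ∈ (P.walk x).2.support := by
        by_contra hy
        exact hswap ⟨x, y, he, hlt, hx, hy⟩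
      rcases Sym2.mem_iff.1 hz with rfl | rfl
      exacts [Walk.end_mem_support _, hy]

end PedestrianState

theorem exists_cover_of_forall_incPath_length_lt (hinj : Set.InjOn φ G.edgeSet)
    (hbdd : ∀ e ∈ G.edgeSet, φ e < t) {k : ℕ}
    (hk : ∀ u v (p : G.Walk u v), p.IsPath → (p.edges.map φ).IsChain (· < ·) → p.length < k) :
    ∃ S : V → Finset V, (∀ v, #(S v) ≤ k) ∧ ∀ e ∈ G.edgeSet, ∃ v, e ∈ (S v).sym2 := by
  obtain ⟨P⟩ := PedestrianState.nonempty hinj t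
  refine ⟨fun x => (P.walk x).2.support.toFinset, fun x => ?_, fun e he => ?_⟩
  · have ⟨hpath, hchain, _⟩ := P.isIncPathBelow x
    calc #(P.walk x).2.support.toFinset ≤ (P.walk x).2.support.length :=
          List.toFinset_card_le _
      _ = (P.walk x).2.length + 1 := Walk.length_support _
      _ ≤ k := hk _ _ _ hpath hchain
  · obtain ⟨x, hx⟩ := P.covers e he (hbdd e he)
    exact ⟨x, Finset.mem_sym2_iff.2 fun y hy => List.mem_toFinset.2 (hx y hy)⟩

end Pedestrians

theorem exists_isEdgeOrdering (G : SimpleGraph V) : ∃ φ, IsEdgeOrdering G φ := by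
  have hE : G.edgeSet.Finite := Set.toFinite _
  refine hE.exists_bijOn_of_encard_eq ?_
  rw [← hE.cast_ncard_eq, ← (Set.finite_Icc 1 _).cast_ncard_eq, Set.ncard_Icc_nat,
    Nat.add_sub_cancel]

theorem exists_psi_eq_incf (G : SimpleGraph V) :
    ∃ φ, IsEdgeOrdering G φ ∧ psi G φ = incf G := by
  obtain ⟨φ, hφ⟩ := exists_isEdgeOrdering G
  exact Nat.sInf_mem (s := {m | ∃ φ, IsEdgeOrdering G φ ∧ psi G φ = m}) ⟨_, φ, hφ, rfl⟩

theorem le_psi {G : SimpleGraph V} {φ : Sym2 V → ℕ} {ℓ : ℕ} (h : HasIncPath G φ ℓ) :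
    ℓ ≤ psi G φ :=
  le_csSup ⟨Fintype.card V, fun _ ⟨_, _, _, hp, _, hℓ⟩ => hℓ ▸ hp.length_lt.le⟩ h

/-- The pedestrian lemma. -/
theorem exists_cover_of_incf_lt {G : SimpleGraph V} {k : ℕ} (h : incf G < k) :
    ∃ S : V → Finset V, (∀ v, #(S v) ≤ k) ∧ ∀ e ∈ G.edgeSet, ∃ v, e ∈ (S v).sym2 := by
  obtain ⟨φ, hφ, hψ⟩ := exists_psi_eq_incf G
  exact exists_cover_of_forall_incPath_length_lt hφ.injOn
    (fun e he => Nat.lt_succ_of_le (hφ.mapsTo he).2)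
    fun u v p hp hchain => (le_psi ⟨u, v, p, hp, hchain, rfl⟩).trans_lt (hψ ▸ h)

section Cliques

variable [DecidableEq V]

def cliqueUnionEdges (S : V → Finset V) : Finset (Sym2 V) :=
  univ.biUnion fun v => (S v).offDiag.image Sym2.mk.uncurry

theorem card_cliqueUnionEdges_le {S : V → Finset V} {k : ℕ} (hS : ∀ v, #(S v) ≤ k) :
    #(cliqueUnionEdges S) ≤ Fintype.card V * k.choose 2 :=
  card_biUnion_le_card_mul _ _ _ fun v _ =>
    (Sym2.card_image_offDiag _).trans_le (Nat.choose_le_choose 2 (hS v))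

theorem cliqueUnionEdges_subset (S : V → Finset V) :
    cliqueUnionEdges S ⊆ (⊤ : SimpleGraph V).edgeFinset := by
  intro e he
  obtain ⟨v, -, he⟩ := mem_biUnion.1 he
  obtain ⟨⟨a, b⟩, hab, rfl⟩ := mem_image.1 he
  simpa using (mem_offDiag.1 hab).2.2

theorem mem_cliqueUnionEdges {S : V → Finset V} {e : Sym2 V} {v : V} (he : ¬e.IsDiag)
    (hv : e ∈ (S v).sym2) : e ∈ cliqueUnionEdges S := by
  induction e using Sym2.ind with | _ a b => ?_
  rw [mk_mem_sym2_iff] at hv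
  exact mem_biUnion.2 ⟨v, mem_univ v, mem_image.2 ⟨(a, b), mem_offDiag.2 ⟨hv.1, hv.2, he⟩, rfl⟩⟩

theorem exists_subset_cliqueUnionEdges_of_incf_lt {k : ℕ} (hk : k ≤ Fintype.card V)
    {H : Finset (Sym2 V)} (hH : H ⊆ (⊤ : SimpleGraph V).edgeFinset)
    (h : incf (SimpleGraph.fromEdgeSet (H : Set (Sym2 V))) < k) :
    ∃ S ∈ Fintype.piFinset fun _ : V => (univ : Finset V).powersetCard k,
      H ⊆ cliqueUnionEdges S := by
  obtain ⟨S, hSk, hcover⟩ := exists_cover_of_incf_lt h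
  choose T hST _ hTk using fun v => exists_subsuperset_card_eq (subset_univ (S v)) (hSk v) hk
  refine ⟨T, Fintype.mem_piFinset.2 fun v => mem_powersetCard.2 ⟨subset_univ _, hTk v⟩,
    fun e he => ?_⟩
  have hdiag : ¬e.IsDiag := SimpleGraph.not_isDiag_of_mem_edgeSet _ (mem_edgeFinset.1 (hH he))
  obtain ⟨v, hv⟩ := hcover e (by simpa [edgeSet_fromEdgeSet] using ⟨he, hdiag⟩)
  exact mem_cliqueUnionEdges hdiag (sym2_mono (hST v) hv)

end Cliques

theorem Finset.sum_biUnion_le_sum_sum {ι α M : Type*} [DecidableEq α] [AddCommMonoid M]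
    [PartialOrder M] [IsOrderedAddMonoid M] (I : Finset ι) (t : ι → Finset α) {f : α → M}
    (hf : ∀ a, 0 ≤ f a) : ∑ a ∈ I.biUnion t, f a ≤ ∑ i ∈ I, ∑ a ∈ t i, f a := by
  induction I using Finset.induction_on with
  | empty => simp
  | insert i I hi ih =>
    rw [biUnion_insert, sum_insert hi]
    calc ∑ a ∈ t i ∪ I.biUnion t, f a
        ≤ ∑ a ∈ t i ∪ I.biUnion t, f a + ∑ a ∈ t i ∩ I.biUnion t, f a :=
          le_add_of_nonneg_right (sum_nonneg fun a _ => hf a)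
      _ = ∑ a ∈ t i, f a + ∑ a ∈ I.biUnion t, f a := sum_union_inter
      _ ≤ ∑ a ∈ t i, f a + ∑ j ∈ I, ∑ a ∈ t j, f a := by gcongr

theorem Finset.sum_powerset_pow_mul_one_sub_pow {α R : Type*} [CommRing R] {A M : Finset α}
    (hAM : A ⊆ M) (p : R) :
    ∑ H ∈ A.powerset, p ^ #H * (1 - p) ^ (#M - #H) = (1 - p) ^ (#M - #A) := by
  calc ∑ H ∈ A.powerset, p ^ #H * (1 - p) ^ (#M - #H)
      = ∑ H ∈ A.powerset, (1 - p) ^ (#M - #A) * (p ^ #H * (1 - p) ^ (#A - #H)) := by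
        refine sum_congr rfl fun H hH => ?_
        have hHA := card_le_card (mem_powerset.1 hH)
        have hAM := card_le_card hAM
        rw [show #M - #H = (#M - #A) + (#A - #H) by omega, pow_add]
        ring
    _ = (1 - p) ^ (#M - #A) := by
        rw [← mul_sum, sum_pow_mul_eq_add_pow, add_sub_cancel, one_pow, mul_one]

/-- The union bound for the random subset of `M` that contains each element independently with
probability `p`. -/
theorem sum_pow_mul_one_sub_pow_le_of_forall_exists_subset {α ι R : Type*} [DecidableEq α]
    [CommRing R] [PartialOrder R] [IsOrderedRing R] {M : Finset α} {p : R} (hp0 : 0 ≤ p)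
    (hp1 : p ≤ 1) {s : Finset (Finset α)} (I : Finset ι) {A : ι → Finset α}
    (hAM : ∀ i, A i ⊆ M) (hs : ∀ H ∈ s, ∃ i ∈ I, H ⊆ A i) :
    ∑ H ∈ s, p ^ #H * (1 - p) ^ (#M - #H) ≤ ∑ i ∈ I, (1 - p) ^ (#M - #(A i)) := by
  have hw : ∀ H : Finset α, 0 ≤ p ^ #H * (1 - p) ^ (#M - #H) := fun H =>
    mul_nonneg (pow_nonneg hp0 _) (pow_nonneg (sub_nonneg.2 hp1) _)
  calc ∑ H ∈ s, p ^ #H * (1 - p) ^ (#M - #H)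
      ≤ ∑ H ∈ I.biUnion fun i => (A i).powerset, p ^ #H * (1 - p) ^ (#M - #H) :=
        sum_le_sum_of_subset_of_nonneg (fun H hH => by simpa using hs H hH) fun H _ _ => hw H
    _ ≤ ∑ i ∈ I, ∑ H ∈ (A i).powerset, p ^ #H * (1 - p) ^ (#M - #H) :=
        sum_biUnion_le_sum_sum I _ hw
    _ = ∑ i ∈ I, (1 - p) ^ (#M - #(A i)) :=
        sum_congr rfl fun i _ => sum_powerset_pow_mul_one_sub_pow (hAM i) p

theorem pow_sub_le_rpow_sub {q : ℝ} (hq0 : 0 < q) (hq1 : q ≤ 1) {a b : ℕ} {c : ℝ}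
    (hbc : (b : ℝ) ≤ c) : q ^ (a - b) ≤ q ^ ((a : ℝ) - c) := by
  rw [← Real.rpow_natCast]
  refine Real.rpow_le_rpow_of_exponent_ge hq0 hq1 ?_
  have : (a : ℝ) ≤ ((a - b : ℕ) : ℝ) + b := by exact_mod_cast le_tsub_add
  linarith

theorem er_incf_lt_prob_le_general (n k : ℕ) (hkn : k ≤ n)
    (p : ℝ) (hp0 : 0 < p) (hp1 : p < 1) :
    erProb n p (fun H => incf (SimpleGraph.fromEdgeSet (↑H : Set (Sym2 (Fin n)))) < k) ≤
      (n.choose k : ℝ) ^ n * (1 - p) ^ ((n.choose 2 : ℝ) - n * (k.choose 2 : ℝ)) := by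
  set Fam := Fintype.piFinset fun _ : Fin n => (univ : Finset (Fin n)).powersetCard k
  have hM : #(⊤ : SimpleGraph (Fin n)).edgeFinset = n.choose 2 := by
    rw [card_edgeFinset_top_eq_card_choose_two, Fintype.card_fin]
  calc _ ≤ ∑ S ∈ Fam, (1 - p) ^ (#(⊤ : SimpleGraph (Fin n)).edgeFinset - #(cliqueUnionEdges S)) :=
        sum_pow_mul_one_sub_pow_le_of_forall_exists_subset hp0.le hp1.le Fam
          cliqueUnionEdges_subset fun H hH => by
            simp only [mem_filter, mem_powerset] at hH
            exact exists_subset_cliqueUnionEdges_of_incf_lt (by simpa) hH.1 hH.2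
    _ ≤ ∑ S ∈ Fam, (1 - p) ^ ((n.choose 2 : ℝ) - n * (k.choose 2 : ℝ)) := by
        refine sum_le_sum fun S hS => ?_
        rw [hM]
        refine pow_sub_le_rpow_sub (by linarith) (by linarith) ?_
        have hS : ∀ v, #(S v) ≤ k := fun v =>
          (mem_powersetCard.1 (Fintype.mem_piFinset.1 hS v)).2.le
        exact_mod_cast (card_cliqueUnionEdges_le hS).trans_eq (by rw [Fintype.card_fin])
    _ = _ := by
        rw [sum_const, Fintype.card_piFinset, prod_const, card_powersetCard, card_univ,
          Fintype.card_fin, nsmul_eq_mul, Nat.cast_pow]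

/-- The probability that `f(G(n,p)) < k` is at most
`C(n,k)^n · (1-p)^(C(n,2) - n·C(k,2))`. -/
theorem er_incf_lt_prob_le (n k : ℕ) (hn : 0 < n) (hk : 0 < k) (hkn : k ≤ n)
    (p : ℝ) (hp0 : 0 < p) (hp1 : p < 1) :
    erProb n p (fun H => incf (SimpleGraph.fromEdgeSet (↑H : Set (Sym2 (Fin n)))) < k) ≤
      (n.choose k : ℝ) ^ n * (1 - p) ^ ((n.choose 2 : ℝ) - n * (k.choose 2 : ℝ)) :=
  er_incf_lt_prob_le_general n k hkn p hp0 hp1
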